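/- arXiv:1410.1254 — 2 statements merged into one kernel-verified Lean document; each statement's English description precedes it below -/
import Mathlib

section
/- If (v,w) is a pair of symmetric 4×4 complex matrices satisfying the Plücker relations of G(3,6), then there exists c ∈ ℂ such that v·w = c·I₄ and c² = det w; i.e. v·w = ±√(det w)·I₄. -/
open Matrix

/-- The smaller element `ǐ₁` of the complement of a 2-element subset `{i₁, i₂}`
of `{1,2,3,4}` (indexed by `Fin 4`). -/
def dual₁ (i₁ i₂ : Fin 4) : Fin 4 :=
  (({i₁, i₂}ᶜ : Finset (Fin 4))).min' (by
    rw [← Finset.card_pos, Finset.card_compl]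
    have h : ({i₁, i₂} : Finset (Fin 4)).card ≤ 2 :=
      (Finset.card_insert_le _ _).trans (by simp)
    simp only [Fintype.card_fin]
    omega)

/-- The larger element `ǐ₂` of the complement of a 2-element subset `{i₁, i₂}`
of `{1,2,3,4}` (indexed by `Fin 4`). -/
def dual₂ (i₁ i₂ : Fin 4) : Fin 4 :=
  (({i₁, i₂}ᶜ : Finset (Fin 4))).max' (by
    rw [← Finset.card_pos, Finset.card_compl]
    have h : ({i₁, i₂} : Finset (Fin 4)).card ≤ 2 :=
      (Finset.card_insert_le _ _).trans (by simp)
    simp only [Fintype.card_fin]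
    omega)

/-- The sign `ε(I)` of the permutation sending `(1,2,3,4)` to `(i₁,i₂,ǐ₁,ǐ₂)`,
for `I = {i₁ < i₂}` with complement `Ǐ = {ǐ₁ < ǐ₂}`. -/
noncomputable def eps (i₁ i₂ : Fin 4) : ℂ :=
  if h : Function.Bijective ![i₁, i₂, dual₁ i₁ i₂, dual₂ i₁ i₂] then
    ((Equiv.Perm.sign (Equiv.ofBijective _ h) : ℤ) : ℂ)
  else 0

/-- The 2×2 minor `m[I,J] = m_{i₁j₁}m_{i₂j₂} − m_{i₁j₂}m_{i₂j₁}`. -/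
def minor (m : Matrix (Fin 4) (Fin 4) ℂ) (i₁ i₂ j₁ j₂ : Fin 4) : ℂ :=
  m i₁ j₁ * m i₂ j₂ - m i₁ j₂ * m i₂ j₁

/-- The pair `(v,w)` of symmetric 4×4 complex matrices satisfies the Plücker
relations of `G(3,6)` (the generators of the Plücker ideal of the embedding
`G(3,∧²V₄) ⊂ ℙ(S²V₄ ⊕ S²V₄*)` given by the double spin decomposition):
(i) `v[I,J] = ε(I)ε(J)·w[Ǐ,J̌]` for all 2-element subsets `I, J`, and
(ii) `v·w` has vanishing off-diagonal entries and equal diagonal entries. -/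
structure PluckerPair (v w : Matrix (Fin 4) (Fin 4) ℂ) : Prop where
  symm_v : v.IsSymm
  symm_w : w.IsSymm
  minor_rel : ∀ i₁ i₂ j₁ j₂ : Fin 4, i₁ < i₂ → j₁ < j₂ →
    minor v i₁ i₂ j₁ j₂ =
      eps i₁ i₂ * eps j₁ j₂ *
        minor w (dual₁ i₁ i₂) (dual₂ i₁ i₂) (dual₁ j₁ j₂) (dual₂ j₁ j₂)
  offDiag : ∀ i j : Fin 4, i ≠ j → (v * w) i j = 0
  diag : ∀ i j : Fin 4, (v * w) i i = (v * w) j j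


lemma eps_eq (i₁ i₂ : Fin 4) (e : Equiv.Perm (Fin 4))
    (he : ![i₁, i₂, dual₁ i₁ i₂, dual₂ i₁ i₂] = ⇑e) :
    eps i₁ i₂ = ((Equiv.Perm.sign e : ℤ) : ℂ) := by
  have hb : Function.Bijective ![i₁, i₂, dual₁ i₁ i₂, dual₂ i₁ i₂] := he ▸ e.bijective
  rw [eps, dif_pos hb]
  have : Equiv.ofBijective _ hb = e := Equiv.ext fun x => congrFun he x
  rw [this]

lemma eps01 : eps 0 1 = 1 := by
  rw [eps_eq 0 1 (Equiv.refl _) (by decide)]; simp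

lemma eps02 : eps 0 2 = -1 := by
  rw [eps_eq 0 2 (Equiv.swap 1 2) (by decide)]
  rw [Equiv.Perm.sign_swap (by decide)]; norm_num

lemma eps03 : eps 0 3 = 1 := by
  rw [eps_eq 0 3 (Equiv.swap 1 2 * Equiv.swap 1 3) (by decide)]
  simp [Equiv.Perm.sign_swap (show (1:Fin 4) ≠ 2 by decide),
    Equiv.Perm.sign_swap (show (1:Fin 4) ≠ 3 by decide)]

lemma eps12 : eps 1 2 = 1 := by
  rw [eps_eq 1 2 (Equiv.swap 0 2 * Equiv.swap 0 1) (by decide)]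
  simp [Equiv.Perm.sign_swap (show (0:Fin 4) ≠ 2 by decide),
    Equiv.Perm.sign_swap (show (0:Fin 4) ≠ 1 by decide)]

lemma eps13 : eps 1 3 = -1 := by
  rw [eps_eq 1 3 (Equiv.swap 0 1 * Equiv.swap 1 3 * Equiv.swap 3 2) (by decide)]
  simp [Equiv.Perm.sign_swap (show (0:Fin 4) ≠ 1 by decide),
    Equiv.Perm.sign_swap (show (1:Fin 4) ≠ 3 by decide),
    Equiv.Perm.sign_swap (show (3:Fin 4) ≠ 2 by decide)]

lemma eps23 : eps 2 3 = 1 := by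
  rw [eps_eq 2 3 (Equiv.swap 0 2 * Equiv.swap 1 3) (by decide)]
  simp [Equiv.Perm.sign_swap (show (0:Fin 4) ≠ 2 by decide),
    Equiv.Perm.sign_swap (show (1:Fin 4) ≠ 3 by decide)]

lemma d101 : dual₁ 0 1 = 2 := by decide
lemma d201 : dual₂ 0 1 = 3 := by decide
lemma d102 : dual₁ 0 2 = 1 := by decide
lemma d202 : dual₂ 0 2 = 3 := by decide
lemma d103 : dual₁ 0 3 = 1 := by decide
lemma d203 : dual₂ 0 3 = 2 := by decide
lemma d112 : dual₁ 1 2 = 0 := by decide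
lemma d212 : dual₂ 1 2 = 3 := by decide
lemma d113 : dual₁ 1 3 = 0 := by decide
lemma d213 : dual₂ 1 3 = 2 := by decide
lemma d123 : dual₁ 2 3 = 0 := by decide
lemma d223 : dual₂ 2 3 = 1 := by decide
/-- If `(v,w)` satisfies the Plücker relations of `G(3,6)`, then
`v·w = ±√(det w)·I₄`: there is `c ∈ ℂ` with `v·w = c·I₄` and `c² = det w`. -/
theorem mul_eq_scalar_of_plucker (v w : Matrix (Fin 4) (Fin 4) ℂ) (h : PluckerPair v w) :
    ∃ c : ℂ, v * w = c • (1 : Matrix (Fin 4) (Fin 4) ℂ) ∧ c ^ 2 = w.det := by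
  have hw : ∀ i j, w j i = w i j := fun i j => by
    conv_lhs => rw [← h.symm_w]
    rfl
  have m01 : minor v 0 1 0 1 = minor w 2 3 2 3 := by
    have t := h.minor_rel 0 1 0 1 (by decide) (by decide)
    simp only [eps01, d101, d201] at t; linear_combination t
  have m02 : minor v 0 1 0 2 = - minor w 2 3 1 3 := by
    have t := h.minor_rel 0 1 0 2 (by decide) (by decide)
    simp only [eps01, eps02, d101, d201, d102, d202] at t; linear_combination t
  have m03 : minor v 0 1 0 3 = minor w 2 3 1 2 := by
    have t := h.minor_rel 0 1 0 3 (by decide) (by decide)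
    simp only [eps01, eps03, d101, d201, d103, d203] at t; linear_combination t
  have m12 : minor v 0 1 1 2 = minor w 2 3 0 3 := by
    have t := h.minor_rel 0 1 1 2 (by decide) (by decide)
    simp only [eps01, eps12, d101, d201, d112, d212] at t; linear_combination t
  have m13 : minor v 0 1 1 3 = - minor w 2 3 0 2 := by
    have t := h.minor_rel 0 1 1 3 (by decide) (by decide)
    simp only [eps01, eps13, d101, d201, d113, d213] at t; linear_combination t
  have m23 : minor v 0 1 2 3 = minor w 2 3 0 1 := by
    have t := h.minor_rel 0 1 2 3 (by decide) (by decide)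
    simp only [eps01, eps23, d101, d201, d123, d223] at t; linear_combination t
  refine ⟨(v * w) 0 0, ?_, ?_⟩
  · ext i j
    rcases eq_or_ne i j with rfl | hij
    · simp only [Matrix.smul_apply, Matrix.one_apply_eq, smul_eq_mul, mul_one]
      exact h.diag i 0
    · simp only [Matrix.smul_apply, Matrix.one_apply_ne hij, smul_eq_mul, mul_zero]
      exact h.offDiag i j hij
  · have e1 : (v * w) 0 0 ^ 2 = (v * w) 0 0 * (v * w) 1 1 - (v * w) 0 1 * (v * w) 1 0 := by
      rw [h.diag 1 0, h.offDiag 0 1 (by decide)]; ring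
    have key : (v * w) 0 0 * (v * w) 1 1 - (v * w) 0 1 * (v * w) 1 0 =
        minor v 0 1 0 1 * minor w 0 1 0 1 + minor v 0 1 0 2 * minor w 0 2 0 1 +
        minor v 0 1 0 3 * minor w 0 3 0 1 + minor v 0 1 1 2 * minor w 1 2 0 1 +
        minor v 0 1 1 3 * minor w 1 3 0 1 + minor v 0 1 2 3 * minor w 2 3 0 1 := by
      simp only [Matrix.mul_apply, Fin.sum_univ_four, minor]; ring
    rw [e1, key, m01, m02, m03, m12, m13, m23]
    simp only [minor]
    simp only [Matrix.det_succ_row_zero, Fin.sum_univ_succ, Fin.sum_univ_zero,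
      Matrix.submatrix_apply, Matrix.det_fin_one, Fin.succAbove, Fin.val_zero, Fin.val_succ]
    norm_num [Fin.lt_def]
    simp only [show (Fin.succ 2 : Fin 4) = 3 from rfl, show (Fin.castSucc 2 : Fin 4) = 2 from rfl,
      show (Fin.succ 1 : Fin 4) = 2 from rfl, show (Fin.castSucc 1 : Fin 4) = 1 from rfl,
      show (Fin.succ 0 : Fin 4) = 1 from rfl, show (Fin.castSucc 0 : Fin 4) = 0 from rfl]
    rw [hw 0 1, hw 0 2, hw 0 3, hw 1 2, hw 1 3, hw 2 3]
    ring
end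

section
/- If (v,w) is a pair of symmetric 4×4 complex matrices satisfying the Plücker relations of G(3,6), then the rank of v equals 2 if and only if the rank of w equals 2. -/
open Matrix

/-!
By the diagonal relations, `v * w = λ • 1`. If `λ ≠ 0` both matrices are invertible, so neither
has rank 2. If `λ = 0` then `v * w = 0`, so `rank v + rank w ≤ 4`. Since every `ε(I)` is nonzero
and `I ↦ Ǐ` is an involution, the minor relations say that `v` has a nonzero `2 × 2` minor iff
`w` does, i.e. `2 ≤ rank v ↔ 2 ≤ rank w`; together with the bound this gives the claim.
-/

namespace Matrix

variable {m n K : Type*} [Fintype n] [Field K]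

theorem rank_le_one_of_forall_mul_sub_mul_eq_zero [Fintype m] (A : Matrix m n K)
    (h : ∀ i i' j j', A i j * A i' j' - A i j' * A i' j = 0) : A.rank ≤ 1 := by
  by_cases hA : A = 0
  · simp [hA]
  obtain ⟨i, j, hij⟩ : ∃ i j, A i j ≠ 0 := by
    by_contra! hc
    exact hA (Matrix.ext hc)
  have hA : A = vecMulVec (fun p => A p j / A i j) (A i) := by
    ext p q
    rw [vecMulVec_apply, div_mul_eq_mul_div, eq_div_iff hij]
    linear_combination h p i q j
  rw [hA]
  exact rank_vecMulVec_le _ _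

theorem two_le_rank_of_mul_sub_mul_ne_zero {A : Matrix m n K} {i i' : m} {j j' : n}
    (h : A i j * A i' j' - A i j' * A i' j ≠ 0) : 2 ≤ A.rank := by
  have hdet : IsUnit (A.submatrix ![i, i'] ![j, j']).det := by
    rw [det_fin_two]
    exact h.isUnit
  calc 2 = (A.submatrix ![i, i'] ![j, j']).rank := by
        rw [rank_of_isUnit _ ((isUnit_iff_isUnit_det _).mpr hdet), Fintype.card_fin]
    _ ≤ A.rank := rank_submatrix_le _ _ _

theorem two_le_rank_iff_exists_mul_sub_mul_ne_zero [Fintype m] (A : Matrix m n K) :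
    2 ≤ A.rank ↔ ∃ i i' j j', A i j * A i' j' - A i j' * A i' j ≠ 0 := by
  refine ⟨fun h2 => ?_, fun ⟨_, _, _, _, h⟩ => two_le_rank_of_mul_sub_mul_ne_zero h⟩
  by_contra! h
  have := A.rank_le_one_of_forall_mul_sub_mul_eq_zero h
  omega

theorem isUnit_of_mul_eq_smul_one [DecidableEq n] {A B : Matrix n n K} {c : K} (hc : c ≠ 0)
    (h : A * B = c • 1) : IsUnit A ∧ IsUnit B := by
  have hA : A * (c⁻¹ • B) = 1 := by
    rw [Matrix.mul_smul, h, smul_smul, inv_mul_cancel₀ hc, one_smul]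
  have hB : (c⁻¹ • A) * B = 1 := by
    rw [Matrix.smul_mul, h, smul_smul, inv_mul_cancel₀ hc, one_smul]
  exact ⟨(isUnit_iff_isUnit_det _).mpr (isUnit_det_of_right_inverse hA),
    (isUnit_iff_isUnit_det _).mpr (isUnit_det_of_left_inverse hB)⟩

end Matrix

theorem dual₁_lt_dual₂ : ∀ {i₁ i₂ : Fin 4}, i₁ < i₂ → dual₁ i₁ i₂ < dual₂ i₁ i₂ := by
  decide

theorem dual₁_dual : ∀ {i₁ i₂ : Fin 4}, i₁ < i₂ →
    dual₁ (dual₁ i₁ i₂) (dual₂ i₁ i₂) = i₁ := by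
  decide

theorem dual₂_dual : ∀ {i₁ i₂ : Fin 4}, i₁ < i₂ →
    dual₂ (dual₁ i₁ i₂) (dual₂ i₁ i₂) = i₂ := by
  decide

theorem bijective_dual : ∀ {i₁ i₂ : Fin 4}, i₁ < i₂ →
    Function.Bijective ![i₁, i₂, dual₁ i₁ i₂, dual₂ i₁ i₂] := by
  decide

theorem eps_ne_zero {i₁ i₂ : Fin 4} (h : i₁ < i₂) : eps i₁ i₂ ≠ 0 := by
  rw [eps, dif_pos (bijective_dual h)]
  rcases Int.units_eq_one_or (Equiv.Perm.sign (Equiv.ofBijective _ (bijective_dual h))) with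
    h1 | h1 <;> simp [h1]

theorem minor_swap_rows (m : Matrix (Fin 4) (Fin 4) ℂ) (a b c d : Fin 4) :
    minor m b a c d = -minor m a b c d := by
  unfold minor; ring

theorem minor_swap_cols (m : Matrix (Fin 4) (Fin 4) ℂ) (a b c d : Fin 4) :
    minor m a b d c = -minor m a b c d := by
  unfold minor; ring

theorem exists_lt_lt_minor_ne_zero {m : Matrix (Fin 4) (Fin 4) ℂ}
    (h : ∃ i₁ i₂ j₁ j₂, minor m i₁ i₂ j₁ j₂ ≠ 0) :
    ∃ i₁ i₂ j₁ j₂, i₁ < i₂ ∧ j₁ < j₂ ∧ minor m i₁ i₂ j₁ j₂ ≠ 0 := by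
  obtain ⟨a, b, c, d, h⟩ := h
  have hab : a ≠ b := by rintro rfl; exact h (by unfold minor; ring)
  have hcd : c ≠ d := by rintro rfl; exact h (by unfold minor; ring)
  rcases hab.lt_or_gt with h1 | h1 <;> rcases hcd.lt_or_gt with h2 | h2
  · exact ⟨a, b, c, d, h1, h2, h⟩
  · exact ⟨a, b, d, c, h1, h2, by rwa [minor_swap_cols, neg_ne_zero]⟩
  · exact ⟨b, a, c, d, h1, h2, by rwa [minor_swap_rows, neg_ne_zero]⟩
  · exact ⟨b, a, d, c, h1, h2, by rwa [minor_swap_rows, minor_swap_cols, neg_neg]⟩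

namespace PluckerPair

variable {v w : Matrix (Fin 4) (Fin 4) ℂ}

theorem exists_minor_ne_zero_iff (h : PluckerPair v w) :
    (∃ i₁ i₂ j₁ j₂, minor v i₁ i₂ j₁ j₂ ≠ 0) ↔ ∃ i₁ i₂ j₁ j₂, minor w i₁ i₂ j₁ j₂ ≠ 0 := by
  constructor
  · intro hv
    obtain ⟨i₁, i₂, j₁, j₂, hi, hj, hne⟩ := exists_lt_lt_minor_ne_zero hv
    rw [h.minor_rel _ _ _ _ hi hj] at hne
    exact ⟨_, _, _, _, right_ne_zero_of_mul hne⟩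
  · intro hw
    obtain ⟨i₁, i₂, j₁, j₂, hi, hj, hne⟩ := exists_lt_lt_minor_ne_zero hw
    refine ⟨dual₁ i₁ i₂, dual₂ i₁ i₂, dual₁ j₁ j₂, dual₂ j₁ j₂, ?_⟩
    have hi' := dual₁_lt_dual₂ hi
    have hj' := dual₁_lt_dual₂ hj
    rw [h.minor_rel _ _ _ _ hi' hj', dual₁_dual hi, dual₂_dual hi, dual₁_dual hj, dual₂_dual hj]
    exact mul_ne_zero (mul_ne_zero (eps_ne_zero hi') (eps_ne_zero hj')) hne

theorem two_le_rank_iff (h : PluckerPair v w) : 2 ≤ v.rank ↔ 2 ≤ w.rank := by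
  rw [two_le_rank_iff_exists_mul_sub_mul_ne_zero, two_le_rank_iff_exists_mul_sub_mul_ne_zero]
  exact h.exists_minor_ne_zero_iff

theorem mul_eq_smul_one (h : PluckerPair v w) : v * w = (v * w) 0 0 • 1 := by
  ext i j
  rcases eq_or_ne i j with rfl | hij
  · simpa using h.diag i 0
  · simpa [one_apply_ne hij] using h.offDiag i j hij

end PluckerPair

/-- If `(v,w)` satisfies the Plücker relations of `G(3,6)`, then
`rank v = 2 ↔ rank w = 2`. -/
theorem rank_two_iff_of_plucker (v w : Matrix (Fin 4) (Fin 4) ℂ) (h : PluckerPair v w) :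
    v.rank = 2 ↔ w.rank = 2 := by
  have hrank := h.two_le_rank_iff
  rcases eq_or_ne ((v * w) 0 0) 0 with h0 | h0
  · have hvw : v * w = 0 := by rw [h.mul_eq_smul_one, h0, zero_smul]
    have hsum := rank_add_rank_le_card_of_mul_eq_zero hvw
    rw [Fintype.card_fin] at hsum
    omega
  · obtain ⟨hv, hw⟩ := isUnit_of_mul_eq_smul_one h0 h.mul_eq_smul_one
    simp [rank_of_isUnit _ hv, rank_of_isUnit _ hw]
end
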